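/- arXiv:2407.04956 — 3 statements merged into one kernel-verified Lean document; each statement's English description precedes it below -/
import Mathlib

section
/- Let ℓ be an element of the extended tensor algebra over ℝ^d whose scalar component satisfies |ℓ^∅| < 1. Then the resolvent Σ_{n=0}^∞ ℓ^{⊗n} is well-defined, in the sense that for every word v, the series of the v-coefficients Σ_{n=0}^∞ ⟨ℓ^{⊗n}, v⟩ converges absolutely. -/
open scoped BigOperators

/-- Words over the alphabet `Fin d`. -/
abbrev Word (d : ℕ) := List (Fin d)

/-- The extended tensor algebra over `ℝ^d`, viewed as coefficient functions on words. -/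
abbrev ETA (d : ℕ) := Word d → ℝ

namespace ETA

variable {d : ℕ}

/-- The unit (empty word) element `∅`. -/
noncomputable def unit (d : ℕ) : ETA d := fun v => if v = [] then 1 else 0

/-- Concatenation (tensor) product. -/
noncomputable def concat (p q : ETA d) : ETA d :=
  fun v => ∑ k ∈ Finset.range (v.length + 1), p (v.take k) * q (v.drop k)

/-- Concatenation powers. -/
noncomputable def cpow (p : ETA d) : ℕ → ETA d
  | 0 => unit d
  | n + 1 => concat (cpow p n) p

/-- Shuffle product of two words as a multiset of words. -/
def shuffleW {A : Type*} : List A → List A → Multiset (List A)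
  | [], w => {w}
  | u, [] => {u}
  | a :: u, b :: w =>
      (shuffleW u (b :: w)).map (a :: ·) + (shuffleW (a :: u) w).map (b :: ·)
  termination_by u w => u.length + w.length
  decreasing_by all_goals (simp only [List.length_cons]; omega)

/-- The finset of all words of length `n` over `Fin d`. -/
noncomputable def wordsLen (d n : ℕ) : Finset (Word d) :=
  Finset.image (fun f : Fin n → Fin d => List.ofFn f) Finset.univ

/-- Shuffle product on the extended tensor algebra (coefficient-wise finite sums). -/
noncomputable def shuffle (p q : ETA d) : ETA d :=
  fun v => ∑ k ∈ Finset.range (v.length + 1),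
    ∑ u ∈ wordsLen d k, ∑ w ∈ wordsLen d (v.length - k),
      p u * q w * ((shuffleW u w).count v : ℝ)

/-- Shuffle powers. -/
noncomputable def spow (p : ETA d) : ℕ → ETA d
  | 0 => unit d
  | n + 1 => shuffle (spow p n) p

/-- A linear combination of single letters `Σ_i c i • e_i`. -/
def letters (c : Fin d → ℝ) : ETA d := fun v =>
  match v with
  | [i] => c i
  | _ => 0

/-- A single letter `e_i`. -/
noncomputable def letter (i : Fin d) : ETA d := fun v => if v = [i] then 1 else 0

/-- The resolvent `(∅ - q)⁻¹ = Σ_n q^{⊗n}`, defined coefficient-wise. -/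
noncomputable def res (q : ETA d) : ETA d := fun v => ∑' n, cpow q n v

/-- The shuffle exponential `exp^⧢(b) = Σ_n b^{⧢n}/n!`, defined coefficient-wise. -/
noncomputable def shuexp (b : ETA d) : ETA d := fun v => ∑' n, spow b n v / (Nat.factorial n : ℝ)

/-- Right projection `ℓ|_i`, removing a terminal letter `i`. -/
def proj (p : ETA d) (i : Fin d) : ETA d := fun v => p (v ++ [i])

end ETA

/-! The coefficient of `ℓ^{⊗(n+1)}` at `v` splits off the term `ℓ^{⊗n}_v ℓ^∅`, so
`|ℓ^{⊗(n+1)}_v| ≤ |ℓ^∅| |ℓ^{⊗n}_v| + Σ_{k < |v|} |ℓ^{⊗n}_{v[:k]}| |ℓ_{v[k:]}|`, where only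
strictly shorter prefixes of `v` occur. By induction on `|v|` the inhomogeneous term is
summable in `n`, and a recursion `f (n+1) ≤ a f n + g n` with `a < 1` and `g` summable forces
`f` to be summable. -/

lemma summable_of_le_mul_add {a : ℝ} {f g : ℕ → ℝ} (ha : a < 1)
    (hf : ∀ n, 0 ≤ f n) (hg : ∀ n, 0 ≤ g n) (hg_sum : Summable g)
    (hrec : ∀ n, f (n + 1) ≤ a * f n + g n) : Summable f := by
  -- summing the recursion gives `(1 - a) ∑_{n<N} f n ≤ f 0 + ∑' n, g n`
  refine summable_of_sum_range_le (c := (f 0 + ∑' n, g n) / (1 - a)) hf fun N => ?_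
  have hsum_g : ∑ n ∈ Finset.range N, g n ≤ ∑' n, g n :=
    hg_sum.sum_le_tsum _ fun n _ => hg n
  have hsum_f : ∑ n ∈ Finset.range N, f (n + 1) ≤
      a * ∑ n ∈ Finset.range N, f n + ∑ n ∈ Finset.range N, g n := by
    rw [Finset.mul_sum, ← Finset.sum_add_distrib]
    exact Finset.sum_le_sum fun n _ => hrec n
  have hmono : ∑ n ∈ Finset.range N, f n ≤ ∑ n ∈ Finset.range (N + 1), f n :=
    Finset.sum_le_sum_of_subset_of_nonneg (by simp) fun n _ _ => hf n
  rw [Finset.sum_range_succ'] at hmono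
  rw [le_div_iff₀ (by linarith)]
  linarith

namespace ETA

variable {d : ℕ}

lemma cpow_succ_apply (ℓ : ETA d) (n : ℕ) (v : Word d) :
    cpow ℓ (n + 1) v =
      cpow ℓ n v * ℓ [] + ∑ k ∈ Finset.range v.length, cpow ℓ n (v.take k) * ℓ (v.drop k) := by
  rw [cpow, concat, Finset.sum_range_succ, List.take_length, List.drop_length, add_comm]

lemma abs_cpow_succ_apply_le (ℓ : ETA d) (n : ℕ) (v : Word d) :
    |cpow ℓ (n + 1) v| ≤
      |ℓ []| * |cpow ℓ n v| +
        ∑ k ∈ Finset.range v.length, |cpow ℓ n (v.take k)| * |ℓ (v.drop k)| := by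
  rw [cpow_succ_apply]
  refine (abs_add_le _ _).trans (add_le_add ((abs_mul _ _).trans (mul_comm _ _)).le ?_)
  exact (Finset.abs_sum_le_sum_abs _ _).trans_eq (Finset.sum_congr rfl fun k _ => abs_mul _ _)

end ETA

/-- If `|ℓ^∅| < 1` then the resolvent `Σ_n ℓ^{⊗n}` is well defined:
for every word `v` the series of `v`-coefficients converges absolutely. -/
theorem resolvent_well_defined (d : ℕ) (ℓ : ETA d) (h : |ℓ []| < 1) (v : Word d) :
    Summable (fun n : ℕ => |ETA.cpow ℓ n v|) := by
  induction hm : v.length using Nat.strong_induction_on generalizing v with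
  | _ m ih =>
    have hprefix : ∀ k ∈ Finset.range v.length, Summable fun n => |ETA.cpow ℓ n (v.take k)| := by
      intro k hk
      refine ih _ ?_ _ rfl
      rw [← hm, List.length_take]
      exact min_lt_of_left_lt (Finset.mem_range.mp hk)
    refine summable_of_le_mul_add h (fun n => abs_nonneg _) ?_ ?_
      (hrec := fun n => ETA.abs_cpow_succ_apply_le ℓ n v)
    · exact fun n => Finset.sum_nonneg fun k _ => mul_nonneg (abs_nonneg _) (abs_nonneg _)
    · exact summable_sum fun k hk => (hprefix k hk).mul_right _
end

section
/- Let a and b be linear combinations of single letters in the tensor algebra over ℝ^d. Then the resolvent of a⊗exp^{⧢}(b) satisfies (∅ - a⊗exp^{⧢}(b))^{-1} = (∅ - b) ⊗ exp^{⧢}(a+b), and the resolvent of exp^{⧢}(b)⊗a satisfies (∅ - exp^{⧢}(b)⊗a)^{-1} = exp^{⧢}(a+b) ⊗ (∅ - b). -/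
/-!
For a linear combination of letters `c`, the shuffle power `c^{⧢n}` is `n!` times the character
`wordProd c` on words of length `n` (shuffling a word with one letter inserts the letter at each
position once), so `exp^⧢(c) = wordProd c`, whose coefficient on `i₁ ⋯ iₖ` is `c i₁ ⋯ c iₖ`.
As `q(∅) = 0`, the resolvent of `q` is the unique solution of `R = ∅ + R ⊗ q`, by induction on
word length. For the right-hand sides this fixed-point equation is checked by peeling off the
first letter of a word (first identity) or the last one (second identity); what makes it close
are the telescoping identities `wordProd (a + b) ⊗ a ⊗ wordProd b = wordProd (a + b) - wordProd b`
and `wordProd c ⊗ (∅ - b) ⊗ wordProd b = wordProd c`.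
-/

open scoped BigOperators

namespace ETA

variable {d : ℕ}

lemma mem_wordsLen {n : ℕ} {u : Word d} : u ∈ wordsLen d n ↔ u.length = n := by
  refine ⟨?_, fun h => ?_⟩
  · simp only [wordsLen, Finset.mem_image]
    rintro ⟨f, -, rfl⟩
    exact List.length_ofFn
  · subst h
    exact Finset.mem_image.mpr ⟨u.get, Finset.mem_univ _, List.ofFn_get u⟩

lemma sum_wordsLen_one {M : Type*} [AddCommMonoid M] (f : Word d → M) :
    ∑ w ∈ wordsLen d 1, f w = ∑ i : Fin d, f [i] := by
  rw [wordsLen, Finset.sum_image fun g _ h _ hgh => List.ofFn_injective hgh]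
  exact Fintype.sum_equiv (Equiv.funUnique (Fin 1) (Fin d)) _ _ fun g => by simp [List.ofFn_succ]

lemma letters_eq_zero (c : Fin d → ℝ) {v : Word d} (h : v.length ≠ 1) : letters c v = 0 := by
  match v with
  | [] => rfl
  | [_] => simp at h
  | _ :: _ :: _ => rfl

lemma letters_add (a b : Fin d → ℝ) : letters (a + b) = letters a + letters b := by
  funext v
  rcases v with _ | ⟨_, _ | _⟩ <;> simp [letters]

lemma shuffleW_singleton_right {A : Type*} (u : List A) (i : A) :
    shuffleW u [i] = (Multiset.range (u.length + 1)).map (u.insertIdx · i) := by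
  induction u with
  | nil => simp [shuffleW]
  | cons a u ih =>
    have range_succ' :
        Multiset.range (u.length + 2) = 0 ::ₘ (Multiset.range (u.length + 1)).map (· + 1) :=
      congrArg ((↑) : List ℕ → Multiset ℕ) List.range_succ_eq_map
    rw [shuffleW.eq_3, ih, shuffleW.eq_2 _ (List.cons_ne_nil a u), List.length_cons, range_succ']
    simp only [Multiset.map_cons, Multiset.map_map, Multiset.map_singleton, Function.comp_def,
      List.insertIdx_zero, List.insertIdx_succ_cons]
    rw [add_comm, Multiset.singleton_add]

lemma _root_.List.insertIdx_eq_iff {A : Type*} {u v : List A} {i : A} {j : ℕ} (hj : j < v.length) :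
    u.insertIdx j i = v ↔ u = v.eraseIdx j ∧ i = v[j] := by
  constructor
  · rintro rfl
    exact ⟨(List.eraseIdx_insertIdx_self i).symm, (List.getElem_insertIdx_self hj).symm⟩
  · rintro ⟨rfl, rfl⟩
    exact List.insertIdx_eraseIdx_getElem hj

lemma count_shuffleW_singleton_right {A : Type*} [DecidableEq A] (u v : List A) (i : A) :
    (shuffleW u [i]).count v
      = ((Finset.range (u.length + 1)).filter (u.insertIdx · i = v)).card := by
  rw [shuffleW_singleton_right, Multiset.count_map, ← Finset.range_val, ← Finset.filter_val]
  simp only [eq_comm, Finset.card_val]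

lemma sum_wordsLen_sum_ite_insertIdx_eq {M : Type*} [AddCommMonoid M] (f : Word d → Fin d → M)
    {n j : ℕ} {v : Word d} (hv : v.length = n + 1) (hj : j < v.length) :
    ∑ u ∈ wordsLen d n, ∑ i, (if u.insertIdx j i = v then f u i else 0)
      = f (v.eraseIdx j) v[j] := by
  simp_rw [List.insertIdx_eq_iff hj, ite_and]
  simp [Finset.sum_ite_irrel, Finset.sum_ite_eq', mem_wordsLen, List.length_eraseIdx_of_lt hj, hv]

lemma shuffle_letters (p : ETA d) (c : Fin d → ℝ) (v : Word d) :
    shuffle p (letters c) v = ∑ j : Fin v.length, p (v.eraseIdx j) * c v[j] := by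
  rcases v with _ | ⟨x, t⟩
  · refine (Finset.sum_eq_zero fun k hk => Finset.sum_eq_zero fun u _ =>
      Finset.sum_eq_zero fun w hw => ?_).trans (Fin.sum_univ_zero _).symm
    simp_all [mem_wordsLen, letters]
  set v := x :: t
  have only_last : shuffle p (letters c) v
      = ∑ u ∈ wordsLen d t.length, ∑ i, p u * c i * ((shuffleW u [i]).count v : ℝ) := by
    rw [shuffle, Finset.sum_eq_single_of_mem t.length (by simp [v])]
    · simp [v, sum_wordsLen_one, letters]
    · intro k hk hkt
      refine Finset.sum_eq_zero fun u _ => Finset.sum_eq_zero fun w hw => ?_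
      rw [letters_eq_zero c, mul_zero, zero_mul]
      rw [mem_wordsLen.mp hw]
      simp only [List.length_cons, Finset.mem_range, v] at hk ⊢
      omega
  calc shuffle p (letters c) v
      = ∑ u ∈ wordsLen d t.length, ∑ i, ∑ j ∈ Finset.range v.length,
          if u.insertIdx j i = v then p u * c i else 0 := by
        rw [only_last]
        refine Finset.sum_congr rfl fun u hu => Finset.sum_congr rfl fun i _ => ?_
        rw [count_shuffleW_singleton_right, mem_wordsLen.mp hu, Finset.natCast_card_filter,
          Finset.mul_sum]
        simp [v]
    _ = ∑ j ∈ Finset.range v.length, ∑ u ∈ wordsLen d t.length, ∑ i,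
          if u.insertIdx j i = v then p u * c i else 0 := by
        simp_rw [Finset.sum_comm (s := Finset.univ), Finset.sum_comm (s := wordsLen d t.length)]
    _ = ∑ j : Fin v.length, p (v.eraseIdx j) * c v[j] := by
        rw [Finset.sum_fin_eq_sum_range]
        refine Finset.sum_congr rfl fun j hj => ?_
        rw [dif_pos (Finset.mem_range.mp hj), sum_wordsLen_sum_ite_insertIdx_eq _ rfl]
        rfl

noncomputable def wordProd (c : Fin d → ℝ) : ETA d := fun v => (v.map c).prod

@[simp] lemma wordProd_nil (c : Fin d → ℝ) : wordProd c [] = 1 := rfl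

@[simp] lemma wordProd_cons (c : Fin d → ℝ) (x : Fin d) (v : Word d) :
    wordProd c (x :: v) = c x * wordProd c v := List.prod_cons

@[simp] lemma wordProd_append_singleton (c : Fin d → ℝ) (v : Word d) (x : Fin d) :
    wordProd c (v ++ [x]) = wordProd c v * c x := by
  simp [wordProd]

lemma wordProd_eraseIdx_mul (c : Fin d → ℝ) {v : Word d} {j : ℕ} (hj : j < v.length) :
    wordProd c (v.eraseIdx j) * c v[j] = wordProd c v := by
  have := List.CommMonoid.mul_prod_eraseIdx (l := v.map c) (by simpa using hj)
  rw [List.eraseIdx_map, List.getElem_map] at this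
  rw [wordProd, wordProd, mul_comm, this]

lemma spow_letters (c : Fin d → ℝ) (n : ℕ) (v : Word d) :
    spow (letters c) n v = if v.length = n then (n.factorial : ℝ) * wordProd c v else 0 := by
  induction n generalizing v with
  | zero => cases v <;> simp [spow, unit]
  | succ n ih =>
    rw [spow, shuffle_letters]
    split_ifs with hv
    · have term (j : Fin v.length) : spow (letters c) n (v.eraseIdx j) * c v[j]
          = (n.factorial : ℝ) * wordProd c v := by
        rw [ih, if_pos (by simp [List.length_eraseIdx_of_lt j.isLt, hv]), mul_assoc]
        exact congrArg _ (wordProd_eraseIdx_mul c j.isLt)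
      simp only [term, Finset.sum_const, Finset.card_univ, Fintype.card_fin, nsmul_eq_mul, hv,
        Nat.factorial_succ]
      push_cast
      ring
    · refine Finset.sum_eq_zero fun j _ => ?_
      have := j.isLt
      rw [ih, if_neg (by rw [List.length_eraseIdx_of_lt j.isLt]; omega), zero_mul]

lemma shuexp_letters (c : Fin d → ℝ) : shuexp (letters c) = wordProd c := by
  funext v
  have off_length (n : ℕ) (hn : n ≠ v.length) : spow (letters c) n v / n.factorial = 0 := by
    rw [spow_letters, if_neg (Ne.symm hn), zero_div]
  rw [shuexp, tsum_eq_single v.length off_length, spow_letters, if_pos rfl,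
    mul_div_cancel_left₀ _ (Nat.cast_ne_zero.mpr v.length.factorial_ne_zero)]

lemma concat_nil (p r : ETA d) : concat p r [] = p [] * r [] := by
  simp [concat]

lemma concat_cons (p r : ETA d) (x : Fin d) (t : Word d) :
    concat p r (x :: t) = p [] * r (x :: t) + concat (fun u => p (x :: u)) r t := by
  rw [concat, List.length_cons, Finset.sum_range_succ', add_comm, concat]
  simp

lemma concat_append_singleton (p r : ETA d) (t : Word d) (x : Fin d) :
    concat p r (t ++ [x]) = concat p (proj r x) t + p (t ++ [x]) * r [] := by
  rw [concat, List.length_append, List.length_singleton, Finset.sum_range_succ, concat]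
  congr 1
  · refine Finset.sum_congr rfl fun k hk => ?_
    have hk : k ≤ t.length := Nat.lt_succ_iff.mp (Finset.mem_range.mp hk)
    rw [List.take_append_of_le_length hk, List.drop_append_of_le_length hk, proj]
  · rw [List.take_of_length_le (by simp), List.drop_eq_nil_of_le (by simp)]

lemma concat_smul_left (c : ℝ) (p r : ETA d) : concat (c • p) r = c • concat p r := by
  funext v
  simp [concat, Finset.mul_sum, mul_assoc]

lemma concat_smul_right (c : ℝ) (p r : ETA d) : concat p (c • r) = c • concat p r := by
  funext v
  simp [concat, Finset.mul_sum, mul_left_comm]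

lemma concat_sub_left (p p' r : ETA d) : concat (p - p') r = concat p r - concat p' r := by
  funext v
  simp [concat, sub_mul]

lemma concat_sub_right (p r r' : ETA d) : concat p (r - r') = concat p r - concat p r' := by
  funext v
  simp [concat, mul_sub]

lemma unit_concat (r : ETA d) : concat (unit d) r = r := by
  funext v
  rw [concat, Finset.sum_eq_single_of_mem 0 (by simp)]
  · simp [unit]
  · intro k hk hk0
    rcases v with _ | _
    · simp_all
    · simp [unit, hk0]

lemma concat_unit (p : ETA d) : concat p (unit d) = p := by
  funext v
  rw [concat, Finset.sum_eq_single_of_mem v.length (by simp)]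
  · simp [unit]
  · intro k hk hkv
    have : k < v.length := (Nat.lt_succ_iff.mp (Finset.mem_range.mp hk)).lt_of_ne hkv
    simp [unit, List.drop_eq_nil_iff, this]

lemma letters_cons (c : Fin d → ℝ) (x : Fin d) : (fun u => letters c (x :: u)) = c x • unit d := by
  funext u
  cases u <;> simp [letters, unit]

lemma proj_letters (c : Fin d → ℝ) (x : Fin d) : proj (letters c) x = c x • unit d := by
  funext u
  rcases u with _ | ⟨y, _ | ⟨z, u⟩⟩ <;> simp [proj, letters, unit]

lemma concat_letters_cons (c : Fin d → ℝ) (r : ETA d) (x : Fin d) (t : Word d) :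
    concat (letters c) r (x :: t) = c x * r t := by
  rw [concat_cons, letters_cons, concat_smul_left, unit_concat]
  simp [letters]

lemma concat_unit_sub_letters_cons (c : Fin d → ℝ) (r : ETA d) (x : Fin d) (t : Word d) :
    concat (unit d - letters c) r (x :: t) = r (x :: t) - c x * r t := by
  rw [concat_sub_left, unit_concat, Pi.sub_apply, concat_letters_cons]

lemma concat_letters_append_singleton (c : Fin d → ℝ) (p : ETA d) (t : Word d) (x : Fin d) :
    concat p (letters c) (t ++ [x]) = p t * c x := by
  rw [concat_append_singleton, proj_letters, concat_smul_right, concat_unit]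
  simp [letters, mul_comm]

lemma concat_unit_sub_letters_append_singleton (c : Fin d → ℝ) (p : ETA d) (t : Word d)
    (x : Fin d) : concat p (unit d - letters c) (t ++ [x]) = p (t ++ [x]) - p t * c x := by
  rw [concat_sub_right, concat_unit, Pi.sub_apply, concat_letters_append_singleton]

section Resolvent

variable {q : ETA d}

lemma cpow_apply_eq_zero_of_length_lt (hq : q [] = 0) {n : ℕ} {v : Word d} (h : v.length < n) :
    cpow q n v = 0 := by
  induction n generalizing v with
  | zero => omega
  | succ n ih =>
    rw [cpow, concat]
    refine Finset.sum_eq_zero fun k hk => ?_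
    rcases (Nat.lt_succ_iff.mp (Finset.mem_range.mp hk)).lt_or_eq with hk | rfl
    · rw [ih ((List.length_take_le _ _).trans_lt (by omega)), zero_mul]
    · rw [List.drop_length, hq, mul_zero]

lemma summable_cpow_apply (hq : q [] = 0) (v : Word d) : Summable fun n => cpow q n v := by
  refine summable_of_ne_finset_zero (s := Finset.range (v.length + 1)) fun n hn => ?_
  exact cpow_apply_eq_zero_of_length_lt hq (by simpa using hn)

lemma res_eq_unit_add_concat (hq : q [] = 0) : res q = unit d + concat (res q) q := by
  funext v
  rw [res, (summable_cpow_apply hq v).tsum_eq_zero_add, Pi.add_apply, concat]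
  congr 1
  simp only [cpow, concat, res]
  rw [Summable.tsum_finsetSum fun k _ => (summable_cpow_apply hq _).mul_right _]
  simp_rw [tsum_mul_right]

lemma concat_congr_left_of_length_lt {p p' r : ETA d} (hr : r [] = 0) {v : Word d}
    (h : ∀ u : Word d, u.length < v.length → p u = p' u) : concat p r v = concat p' r v := by
  refine Finset.sum_congr rfl fun k hk => ?_
  rcases (Nat.lt_succ_iff.mp (Finset.mem_range.mp hk)).lt_or_eq with hk | rfl
  · rw [h _ ((List.length_take_le _ _).trans_lt hk)]
  · rw [List.drop_length, hr, mul_zero, mul_zero]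

lemma eq_of_eq_unit_add_concat (hq : q [] = 0) {R S : ETA d} (hR : R = unit d + concat R q)
    (hS : S = unit d + concat S q) : R = S := by
  funext v
  induction hv : v.length using Nat.strong_induction_on generalizing v with
  | _ n ih =>
    rw [hR, hS, Pi.add_apply, Pi.add_apply,
      concat_congr_left_of_length_lt hq fun u hu => ih _ (hv ▸ hu) u rfl]

lemma res_eq_of_eq_unit_add_concat (hq : q [] = 0) {R : ETA d}
    (hR : R = unit d + concat R q) : res q = R :=
  eq_of_eq_unit_add_concat hq (res_eq_unit_add_concat hq) hR

end Resolvent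

lemma concat_wordProd_cons (c : Fin d → ℝ) (r : ETA d) (y : Fin d) (s : Word d) :
    concat (wordProd c) r (y :: s) = r (y :: s) + c y * concat (wordProd c) r s := by
  have : (fun u => wordProd c (y :: u)) = c y • wordProd c := by
    funext u
    simp
  rw [concat_cons, this, concat_smul_left, wordProd_nil, one_mul, Pi.smul_apply, smul_eq_mul]

lemma concat_wordProd_append_singleton (p : ETA d) (c : Fin d → ℝ) (s : Word d) (y : Fin d) :
    concat p (wordProd c) (s ++ [y]) = concat p (wordProd c) s * c y + p (s ++ [y]) := by
  have : proj (wordProd c) y = c y • wordProd c := by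
    funext u
    simp [proj, mul_comm]
  rw [concat_append_singleton, this, concat_smul_right, wordProd_nil, mul_one, Pi.smul_apply,
    smul_eq_mul, mul_comm]

lemma concat_wordProd_add_concat_letters_wordProd (a b : Fin d → ℝ) :
    concat (wordProd (a + b)) (concat (letters a) (wordProd b))
      = wordProd (a + b) - wordProd b := by
  funext t
  induction t with
  | nil => simp [concat_nil, letters]
  | cons y s ih =>
    rw [concat_wordProd_cons, ih, concat_letters_cons]
    simp only [Pi.add_apply, Pi.sub_apply, wordProd_cons]
    ring

lemma res_concat_letters_wordProd (a b : Fin d → ℝ) :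
    res (concat (letters a) (wordProd b)) = concat (unit d - letters b) (wordProd (a + b)) := by
  refine res_eq_of_eq_unit_add_concat (by simp [concat_nil, letters]) ?_
  funext v
  rcases v with _ | ⟨x, t⟩
  · simp [concat_nil, unit, letters]
  · have : (fun u => concat (unit d - letters b) (wordProd (a + b)) (x :: u))
        = a x • wordProd (a + b) := by
      funext u
      rw [concat_unit_sub_letters_cons]
      simp only [wordProd_cons, Pi.add_apply, Pi.smul_apply, smul_eq_mul]
      ring
    rw [concat_unit_sub_letters_cons, Pi.add_apply, concat_cons, this, concat_smul_left,
      Pi.smul_apply, concat_wordProd_add_concat_letters_wordProd, concat_letters_cons]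
    simp only [wordProd_cons, Pi.add_apply, unit, reduceCtorEq, ↓reduceIte, concat_nil,
      Pi.sub_apply, letters, sub_zero, wordProd_nil, mul_one, one_mul, smul_eq_mul, zero_add]
    ring

lemma concat_concat_unit_sub_letters_wordProd (b c : Fin d → ℝ) :
    concat (concat (wordProd c) (unit d - letters b)) (wordProd b) = wordProd c := by
  funext t
  induction t using List.reverseRecOn with
  | nil => simp [concat_nil, unit, letters]
  | append_singleton s x ih =>
    rw [concat_wordProd_append_singleton, ih, concat_unit_sub_letters_append_singleton]
    simp

lemma res_concat_wordProd_letters (a b : Fin d → ℝ) :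
    res (concat (wordProd b) (letters a)) = concat (wordProd (a + b)) (unit d - letters b) := by
  refine res_eq_of_eq_unit_add_concat (by simp [concat_nil, letters]) ?_
  funext v
  rcases v.eq_nil_or_concat with rfl | ⟨t, x, rfl⟩
  · simp [concat_nil, unit, letters]
  · have : proj (concat (wordProd b) (letters a)) x = a x • wordProd b := by
      funext u
      simp [proj, concat_letters_append_singleton, mul_comm]
    rw [List.concat_eq_append, concat_unit_sub_letters_append_singleton, Pi.add_apply,
      concat_append_singleton, this, concat_smul_right, Pi.smul_apply,
      concat_concat_unit_sub_letters_wordProd]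
    simp only [wordProd_append_singleton, Pi.add_apply, unit, List.append_eq_nil_iff,
      List.cons_ne_self, and_false, ↓reduceIte, smul_eq_mul, concat_nil, wordProd_nil, letters,
      mul_zero, add_zero, zero_add]
    ring

end ETA

/-- For linear combinations of single letters `a, b`:
`(∅ - a⊗exp^⧢(b))⁻¹ = (∅ - b) ⊗ exp^⧢(a+b)` and
`(∅ - exp^⧢(b)⊗a)⁻¹ = exp^⧢(a+b) ⊗ (∅ - b)`. -/
theorem res_concat_shuexp (d : ℕ) (a b : Fin d → ℝ) :
    ETA.res (ETA.concat (ETA.letters a) (ETA.shuexp (ETA.letters b)))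
      = ETA.concat (ETA.unit d - ETA.letters b)
          (ETA.shuexp (ETA.letters a + ETA.letters b)) ∧
    ETA.res (ETA.concat (ETA.shuexp (ETA.letters b)) (ETA.letters a))
      = ETA.concat (ETA.shuexp (ETA.letters a + ETA.letters b))
          (ETA.unit d - ETA.letters b) := by
  rw [← ETA.letters_add, ETA.shuexp_letters, ETA.shuexp_letters]
  exact ⟨ETA.res_concat_letters_wordProd a b, ETA.res_concat_wordProd_letters a b⟩
end

section
/- Let W be a one-dimensional standard Brownian motion, Ŵ_t = (t, W_t), and let 𝕎̂ denote its Stratonovich signature over the two-letter alphabet {1,2}. For a word v of length n containing x occurrences of the letter 1, the second moment of the corresponding signature coefficient satisfies E[⟨v, 𝕎̂_t⟩²] ≤ C(2n, n) · t^{n+x}/(n+x)! · 2^{x-n}, where C(2n,n) is the central binomial coefficient. -/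
open scoped BigOperators

open MeasureTheory

/-- `W` is a standard one-dimensional Brownian motion on `(Ω, μ)`: measurable marginals,
a.s. continuous paths started at `0`, Gaussian increments `W_t - W_s ~ N(0, t-s)`, and
independent increments. -/
def IsBrownianMotion {Ω : Type*} [MeasurableSpace Ω] (μ : Measure Ω)
    (W : ℝ → Ω → ℝ) : Prop :=
  (∀ t : ℝ, Measurable (W t)) ∧
  (∀ᵐ ω ∂μ, W 0 ω = 0 ∧ Continuous fun t => W t ω) ∧
  (∀ s t : ℝ, 0 ≤ s → s ≤ t →
    μ.map (fun ω => W t ω - W s ω)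
      = ProbabilityTheory.gaussianReal 0 (Real.toNNReal (t - s))) ∧
  (∀ (n : ℕ) (u : ℕ → ℝ), Monotone u → (∀ i, 0 ≤ u i) →
    ProbabilityTheory.iIndepFun
      (fun i : Fin n => fun ω => W (u (i + 1)) ω - W (u i) ω) μ)

/-- The element `e_1 + ½ e_2 ⊗ e_2` of Fawcett's formula (letter `0` is the time letter,
letter `1` the Brownian letter). -/
noncomputable def fawcettBase : ETA 2 := fun v =>
  if v = [(0 : Fin 2)] then 1 else if v = [(1 : Fin 2), 1] then (1 : ℝ) / 2 else 0

/-- The coefficients of `E[𝕎̂_t] = Σ_m (t^m/m!) (e_1 + ½ e_2⊗e_2)^{⊗m}` (Fawcett's formula). -/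
noncomputable def fawcett (t : ℝ) : ETA 2 := fun v =>
  ∑' m : ℕ, t ^ m / (Nat.factorial m : ℝ) * ETA.cpow fawcettBase m v

/-! The shuffle identity turns `⟨v, 𝕎̂_t⟩²` into `∑_{z ∈ v ⧢ v} ⟨z, 𝕎̂_t⟩`, so by Fawcett's formula
the second moment is a sum, over the `C(2n, n)` shuffles `z`, of coefficients of
`∑_m t^m/m! (e_1 + ½ e_2⊗e_2)^{⊗m}`. Giving the time letter weight `2` and the Brownian letter
weight `1`, `(e_1 + ½ e_2⊗e_2)^{⊗m}` is homogeneous of weight `2m`, so only `m = n + x` contributes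
to the coefficient of `z`, and that coefficient is at most `2^{-k}`, one factor `½` for each of the
`k = n - x` blocks `e_2⊗e_2` that `z` must consist of besides its time letters. -/

namespace ETA

theorem perm_append_of_mem_shuffleW {A : Type*} :
    ∀ {u w z : List A}, z ∈ shuffleW u w → z.Perm (u ++ w)
  | [], w, z, hz => by
    rw [shuffleW, Multiset.mem_singleton] at hz
    rw [hz, List.nil_append]
  | a :: u, [], z, hz => by
    rw [shuffleW, Multiset.mem_singleton] at hz
    · rw [hz, List.append_nil]
    · simp
  | a :: u, b :: w, z, hz => by
    rw [shuffleW, Multiset.mem_add, Multiset.mem_map, Multiset.mem_map] at hz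
    rcases hz with ⟨z, hz, rfl⟩ | ⟨z, hz, rfl⟩
    · exact (perm_append_of_mem_shuffleW hz).cons a
    · exact ((perm_append_of_mem_shuffleW hz).cons b).trans List.perm_middle.symm
  termination_by u w => u.length + w.length

theorem card_shuffleW {A : Type*} :
    ∀ u w : List A, Multiset.card (shuffleW u w) = (u.length + w.length).choose u.length
  | [], w => by simp [shuffleW]
  | a :: u, [] => by
    rw [shuffleW]
    · simp
    · simp
  | a :: u, b :: w => by
    rw [shuffleW, Multiset.card_add, Multiset.card_map, Multiset.card_map, card_shuffleW,
      card_shuffleW]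
    simp only [List.length_cons]
    rw [show u.length + 1 + (w.length + 1) = u.length + (w.length + 1) + 1 by omega,
      Nat.choose_succ_succ', show u.length + 1 + w.length = u.length + (w.length + 1) by omega]
  termination_by u w => u.length + w.length

variable {d : ℕ}

theorem concat_add (p q r : ETA d) : concat p (q + r) = concat p q + concat p r := by
  ext v
  simp only [concat, Pi.add_apply, mul_add, Finset.sum_add_distrib]

theorem concat_single_append (p : ETA d) (y s : Word d) (c : ℝ) :
    concat p (Pi.single s c) (y ++ s) = p y * c := by
  rw [concat, Finset.sum_eq_single_of_mem y.length (by simp)]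
  · simp
  · intro k hk hky
    rw [Pi.single_apply, if_neg, mul_zero]
    intro h
    have := congrArg List.length h
    simp only [Finset.mem_range, List.length_append, List.length_drop] at hk this
    omega

theorem concat_single_of_not_suffix (p : ETA d) {s v : Word d} (c : ℝ) (h : ¬ s <:+ v) :
    concat p (Pi.single s c) v = 0 := by
  refine Finset.sum_eq_zero fun k _ => ?_
  rw [Pi.single_apply, if_neg, mul_zero]
  rintro rfl
  exact h (List.drop_suffix k v)

def IsHomogeneous {M : Type*} (wt : Word d → M) (k : M) (p : ETA d) : Prop :=
  ∀ v, p v ≠ 0 → wt v = k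

section Homogeneous

variable {M : Type*} [AddLeftCancelMonoid M] {wt : Word d → M}

theorem IsHomogeneous.concat (hwt : ∀ a b, wt (a ++ b) = wt a + wt b) {k l : M} {p q : ETA d}
    (hp : IsHomogeneous wt k p) (hq : IsHomogeneous wt l q) :
    IsHomogeneous wt (k + l) (ETA.concat p q) := by
  intro v hv
  obtain ⟨i, -, hi⟩ := Finset.exists_ne_zero_of_sum_ne_zero hv
  rw [← List.take_append_drop i v, hwt, hp _ (left_ne_zero_of_mul hi),
    hq _ (right_ne_zero_of_mul hi)]

theorem isHomogeneous_unit (hwt : ∀ a b, wt (a ++ b) = wt a + wt b) :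
    IsHomogeneous wt 0 (unit d) := by
  intro v hv
  obtain rfl : v = [] := by simpa [unit] using hv
  simpa using (hwt [] []).symm

theorem IsHomogeneous.cpow (hwt : ∀ a b, wt (a ++ b) = wt a + wt b) {k : M} {p : ETA d}
    (hp : IsHomogeneous wt k p) : ∀ m, IsHomogeneous wt (m • k) (cpow p m)
  | 0 => by rw [ETA.cpow, zero_nsmul]; exact isHomogeneous_unit hwt
  | m + 1 => by rw [ETA.cpow, succ_nsmul]; exact (hp.cpow hwt m).concat hwt hp

end Homogeneous

end ETA

section
variable {α ι G : Type*} [MeasurableSpace α] {μ : Measure α} [NormedAddCommGroup G]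
  {f : ι → α → G}

theorem MeasureTheory.integrable_multiset_sum_map (M : Multiset ι)
    (hf : ∀ i ∈ M, Integrable (f i) μ) : Integrable (fun a => (M.map fun i => f i a).sum) μ := by
  induction M using Multiset.induction_on with
  | empty => simp
  | cons i M ih =>
    simp only [Multiset.map_cons, Multiset.sum_cons]
    exact (hf i (Multiset.mem_cons_self i M)).add (ih fun j hj => hf j (Multiset.mem_cons_of_mem hj))

theorem MeasureTheory.integral_multiset_sum_map [NormedSpace ℝ G] (M : Multiset ι)
    (hf : ∀ i ∈ M, Integrable (f i) μ) :
    ∫ a, (M.map fun i => f i a).sum ∂μ = (M.map fun i => ∫ a, f i a ∂μ).sum := by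
  induction M using Multiset.induction_on with
  | empty => simp
  | cons i M ih =>
    have hM : ∀ j ∈ M, Integrable (f j) μ := fun j hj => hf j (Multiset.mem_cons_of_mem hj)
    simp only [Multiset.map_cons, Multiset.sum_cons]
    rw [integral_add (hf i (Multiset.mem_cons_self i M)) (integrable_multiset_sum_map M hM), ih hM]

end

open ETA
open scoped Nat

theorem Word.count_zero_add_count_one (v : Word 2) : v.count 0 + v.count 1 = v.length := by
  induction v with
  | nil => rfl
  | cons a v ih => fin_cases a <;> simp <;> omega

theorem fawcettBase_eq : fawcettBase = Pi.single [0] 1 + Pi.single [1, 1] (1 / 2) := by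
  ext v
  simp only [fawcettBase, Pi.add_apply, Pi.single_apply]
  split_ifs <;> simp_all

theorem concat_fawcettBase (p : ETA 2) :
    concat p fawcettBase = concat p (Pi.single [0] 1) + concat p (Pi.single [1, 1] (1 / 2)) := by
  rw [fawcettBase_eq, concat_add]

theorem isHomogeneous_fawcettBase :
    IsHomogeneous (fun v : Word 2 => v.length + v.count 0) 2 fawcettBase := by
  intro v hv
  unfold fawcettBase at hv
  split_ifs at hv with h0 h11
  · simp [h0]
  · simp [h11]
  · exact absurd rfl hv

theorem cpow_fawcettBase_le : ∀ (m : ℕ) (z : Word 2),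
    cpow fawcettBase m z ≤ (1 / 2 : ℝ) ^ (z.count 1 / 2)
  | 0, z => by
    by_cases hz : z = []
    · simp [cpow, unit, hz]
    · simp only [cpow, unit, if_neg hz]
      positivity
  | m + 1, z => by
    rw [cpow, concat_fawcettBase, Pi.add_apply]
    by_cases h0 : [0] <:+ z
    · obtain ⟨y, rfl⟩ := h0
      rw [concat_single_append, concat_single_of_not_suffix _ _ (by simp [← List.reverse_prefix])]
      simpa using cpow_fawcettBase_le m y
    by_cases h11 : [1, 1] <:+ z
    · obtain ⟨y, rfl⟩ := h11
      rw [concat_single_of_not_suffix _ _ h0, concat_single_append]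
      have hcount : (y ++ [1, 1]).count 1 / 2 = y.count 1 / 2 + 1 := by simp
      rw [hcount, pow_succ, zero_add]
      gcongr
      exact cpow_fawcettBase_le m y
    · rw [concat_single_of_not_suffix _ _ h0, concat_single_of_not_suffix _ _ h11, add_zero]
      positivity

theorem fawcett_le {t : ℝ} (ht : 0 ≤ t) {z : Word 2} {n : ℕ} (hz : z.length + z.count 0 = 2 * n) :
    fawcett t z ≤ t ^ n / n ! * (1 / 2 : ℝ) ^ (z.count 1 / 2) := by
  rw [fawcett, tsum_eq_single n]
  · gcongr
    exact cpow_fawcettBase_le n z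
  · intro m hm
    suffices cpow fawcettBase m z = 0 by rw [this, mul_zero]
    by_contra hne
    have := (isHomogeneous_fawcettBase.cpow (fun a b => by simp; ring) m) z hne
    simp only [smul_eq_mul] at this
    omega

theorem two_zpow_count_zero_sub_length (v : Word 2) :
    (2 : ℝ) ^ ((v.count 0 : ℤ) - v.length) = (1 / 2) ^ v.count 1 := by
  rw [← Word.count_zero_add_count_one v, Nat.cast_add, sub_add_cancel_left, zpow_neg,
    zpow_natCast, one_div, inv_pow]

theorem fawcett_le_of_mem_shuffleW_self {t : ℝ} (ht : 0 ≤ t) {v z : Word 2}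
    (hz : z ∈ shuffleW v v) :
    fawcett t z ≤ t ^ (v.length + v.count 0) / (v.length + v.count 0)! * (1 / 2) ^ v.count 1 := by
  have hperm := perm_append_of_mem_shuffleW hz
  have hcount (a : Fin 2) : z.count a = 2 * v.count a := by
    rw [hperm.count_eq, List.count_append, two_mul]
  have hle := fawcett_le ht (z := z) (n := v.length + v.count 0)
    (by rw [hperm.length_eq, hcount, List.length_append]; ring)
  rwa [hcount, Nat.mul_div_cancel_left _ two_pos] at hle

theorem second_moment_bound_general {Ω : Type*} [MeasurableSpace Ω] (μ : Measure Ω)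
    [MeasureTheory.IsProbabilityMeasure μ]
    (S : Word 2 → ℝ → Ω → ℝ)
    (hmeas : ∀ v t, Measurable (S v t))
    (hint : ∀ v t, MeasureTheory.Integrable (fun ω => (S v t ω) ^ 2) μ)
    (hshuffle : ∀ (u w : Word 2) (t : ℝ), ∀ᵐ ω ∂μ,
      S u t ω * S w t ω = ((ETA.shuffleW u w).map fun z => S z t ω).sum)
    (hFawcett : ∀ (v : Word 2) (t : ℝ), 0 ≤ t → (∫ ω, S v t ω ∂μ) = fawcett t v)
    (v : Word 2) (t : ℝ) (ht : 0 ≤ t) :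
    ∫ ω, (S v t ω) ^ 2 ∂μ ≤
      (Nat.choose (2 * v.length) v.length : ℝ) *
        (t ^ (v.length + v.count 0) / (Nat.factorial (v.length + v.count 0) : ℝ)) *
        (2 : ℝ) ^ ((v.count 0 : ℤ) - (v.length : ℤ)) := by
  have hS : ∀ z, Integrable (S z t) μ := fun z =>
    ((memLp_two_iff_integrable_sq (hmeas z t).aestronglyMeasurable).2 (hint z t)).integrable
      one_le_two
  have hmoment : ∫ ω, S v t ω ^ 2 ∂μ = ((shuffleW v v).map (fawcett t)).sum := by
    rw [integral_congr_ae ((hshuffle v v t).mono fun ω h => (sq _).trans h),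
      integral_multiset_sum_map _ fun z _ => hS z]
    exact congrArg Multiset.sum (Multiset.map_congr rfl fun z _ => hFawcett z t ht)
  have hterm : ∀ c ∈ (shuffleW v v).map (fawcett t),
      c ≤ t ^ (v.length + v.count 0) / (v.length + v.count 0)! * (1 / 2) ^ v.count 1 :=
    Multiset.forall_mem_map_iff.2 fun _ hz => fawcett_le_of_mem_shuffleW_self ht hz
  calc _ = _ := hmoment
    _ ≤ _ := Multiset.sum_le_card_nsmul _ _ hterm
    _ = _ := by
      rw [Multiset.card_map, card_shuffleW, two_zpow_count_zero_sub_length, nsmul_eq_mul, two_mul,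
        mul_assoc]

/-- Let `W` be a Brownian motion and `S` the Stratonovich signature of
`Ŵ_t = (t, W_t)` (characterized by: level zero is `1`, integration of the time letter is
the pathwise integral, the shuffle identity holds, and Fawcett's formula gives the
expectation). Then for a word `v` of length `n` with `x` occurrences of the time letter,
`E[⟨v, 𝕎̂_t⟩²] ≤ C(2n,n) · t^{n+x}/(n+x)! · 2^{x-n}`. -/
theorem second_moment_bound {Ω : Type*} [MeasurableSpace Ω] (μ : Measure Ω)
    [MeasureTheory.IsProbabilityMeasure μ]
    (W : ℝ → Ω → ℝ) (hW : IsBrownianMotion μ W)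
    (S : Word 2 → ℝ → Ω → ℝ)
    (hmeas : ∀ v t, Measurable (S v t))
    (hint : ∀ v t, MeasureTheory.Integrable (fun ω => (S v t ω) ^ 2) μ)
    (hempty : ∀ t ω, S [] t ω = 1)
    (htime : ∀ v t ω, S (v ++ [(0 : Fin 2)]) t ω = ∫ s in (0:ℝ)..t, S v s ω)
    (hshuffle : ∀ (u w : Word 2) (t : ℝ), ∀ᵐ ω ∂μ,
      S u t ω * S w t ω = ((ETA.shuffleW u w).map fun z => S z t ω).sum)
    (hFawcett : ∀ (v : Word 2) (t : ℝ), 0 ≤ t → (∫ ω, S v t ω ∂μ) = fawcett t v)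
    (v : Word 2) (t : ℝ) (ht : 0 ≤ t) :
    ∫ ω, (S v t ω) ^ 2 ∂μ ≤
      (Nat.choose (2 * v.length) v.length : ℝ) *
        (t ^ (v.length + v.count 0) / (Nat.factorial (v.length + v.count 0) : ℝ)) *
        (2 : ℝ) ^ ((v.count 0 : ℤ) - (v.length : ℤ)) :=
  second_moment_bound_general μ S hmeas hint hshuffle hFawcett v t ht
end
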